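/- arXiv:2008.13016 — 5 statements merged into one kernel-verified Lean document; each statement's English description precedes it below -/
import Mathlib

section
/- If a mixture process M makes a transition M →⟨W ▹ R,I,P⟩ M' in the SOS semantics for RS processes, then M' is structurally equivalent to M'' | P for some mixture M'' (Lemma 1: products always appear in the target state). -/
/-- Context processes `K ::= 0 | X | C.K | K+K | rec X. K` (de Bruijn variables). -/
inductive Ctx (α : Type) : Type where
  | nil : Ctx α
  | var : ℕ → Ctx α
  | pre : Finset α → Ctx α → Ctx α
  | choice : Ctx α → Ctx α → Ctx α
  | mu : Ctx α → Ctx α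

/-- Substitution of the context `T` for the variable of de Bruijn index `d`. -/
def Ctx.subst {α : Type} (d : ℕ) (T : Ctx α) : Ctx α → Ctx α
  | .nil => .nil
  | .var n => if n = d then T else .var n
  | pre C K => .pre C (Ctx.subst d T K)
  | .choice K₁ K₂ => .choice (Ctx.subst d T K₁) (Ctx.subst d T K₂)
  | .mu K => .mu (Ctx.subst (d + 1) T K)

/-- Mixture processes `M ::= (R,I,P) | D | K | M|M`. -/
inductive Mix (α : Type) : Type where
  | reaction : Finset α → Finset α → Finset α → Mix α
  | entities : Finset α → Mix α
  | ctx : Ctx α → Mix α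
  | par : Mix α → Mix α → Mix α

/-- A transition label `⟨W ▹ R, I, P⟩`. -/
structure Label (α : Type) where
  W : Finset α
  R : Finset α
  I : Finset α
  P : Finset α

/-- SOS transitions of context processes: rules (Cxt), (Rec), (Suml), (Sumr). -/
inductive CtxStep {α : Type} : Ctx α → Label α → Ctx α → Prop where
  | cxt (C : Finset α) (K : Ctx α) : CtxStep (.pre C K) ⟨C, ∅, ∅, ∅⟩ K
  | unfold {K : Ctx α} {l K'} : CtxStep (Ctx.subst 0 (.mu K) K) l K' → CtxStep (.mu K) l K'
  | suml {K₁ K₂ l K'} : CtxStep K₁ l K' → CtxStep (.choice K₁ K₂) l K'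
  | sumr {K₁ K₂ l K'} : CtxStep K₂ l K' → CtxStep (.choice K₁ K₂) l K'

/-- SOS transitions of mixture processes: rules (Ent), (Cxt), (Pro), (Inh), (Par).
Reactions are assumed well formed: `R ∩ I = ∅`. -/
inductive MixStep {α : Type} [DecidableEq α] : Mix α → Label α → Mix α → Prop where
  | ent (D : Finset α) : MixStep (.entities D) ⟨D, ∅, ∅, ∅⟩ (.entities ∅)
  | ctx {K l K'} : CtxStep K l K' → MixStep (.ctx K) l (.ctx K')
  | pro {R I P : Finset α} : R ∩ I = ∅ →
      MixStep (.reaction R I P) ⟨∅, R, I, P⟩ (.par (.reaction R I P) (.entities P))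
  | inh {R I P J Q : Finset α} : R ∩ I = ∅ → J ⊆ I → Q ⊆ R → (J ∪ Q).Nonempty →
      MixStep (.reaction R I P) ⟨∅, J, Q, ∅⟩ (.reaction R I P)
  | par {M₁ l₁ M₁' M₂ l₂ M₂'} : MixStep M₁ l₁ M₁' → MixStep M₂ l₂ M₂' →
      (l₁.W ∪ l₂.W ∪ l₁.R ∪ l₂.R) ∩ (l₁.I ∪ l₂.I) = ∅ →
      MixStep (.par M₁ M₂) ⟨l₁.W ∪ l₂.W, l₁.R ∪ l₂.R, l₁.I ∪ l₂.I, l₁.P ∪ l₂.P⟩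
        (.par M₁' M₂')

/-- Structural equivalence of mixtures: commutative monoid laws for `|` with unit `∅`,
and merging of entity sets. -/
inductive StructEq {α : Type} [DecidableEq α] : Mix α → Mix α → Prop where
  | refl (M : Mix α) : StructEq M M
  | symm {M N} : StructEq M N → StructEq N M
  | trans {M N O} : StructEq M N → StructEq N O → StructEq M O
  | parComm (M N : Mix α) : StructEq (.par M N) (.par N M)
  | parAssoc (M N O : Mix α) : StructEq (.par (.par M N) O) (.par M (.par N O))
  | parUnit (M : Mix α) : StructEq (.par M (.entities ∅)) M
  | entMerge (D₁ D₂ : Finset α) :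
      StructEq (.par (.entities D₁) (.entities D₂)) (.entities (D₁ ∪ D₂))
  | parCong {M M' N N'} : StructEq M M' → StructEq N N' →
      StructEq (.par M N) (.par M' N')

/-- Rule (Sys): top-level transitions of RS processes `[M]`. -/
inductive SysStep {α : Type} [DecidableEq α] : Mix α → Label α → Mix α → Prop where
  | sys {M l M'} : MixStep M l M' → l.R ⊆ l.W → SysStep M l M'

infix:50 " ≡' " => StructEq

instance {α : Type} [DecidableEq α] : Trans (@StructEq α _) StructEq StructEq := ⟨StructEq.trans⟩

lemma ctxStep_P_eq {α : Type} {K : Ctx α} {l : Label α} {K' : Ctx α}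
    (h : CtxStep K l K') : l.P = ∅ := by
  induction h <;> simp_all

lemma structEq_shuffle {α : Type} [DecidableEq α] (A B C D : Mix α) :
    StructEq (.par (.par A B) (.par C D)) (.par (.par A C) (.par B D)) := by
  calc Mix.par (.par A B) (.par C D)
      ≡' Mix.par A (.par B (.par C D)) := StructEq.parAssoc _ _ _
    _ ≡' Mix.par A (.par (.par B C) D) := StructEq.parCong (.refl _) ((StructEq.parAssoc _ _ _).symm)
    _ ≡' Mix.par A (.par (.par C B) D) := StructEq.parCong (.refl _) (StructEq.parCong (StructEq.parComm _ _) (.refl _))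
    _ ≡' Mix.par A (.par C (.par B D)) := StructEq.parCong (.refl _) (StructEq.parAssoc _ _ _)
    _ ≡' Mix.par (.par A C) (.par B D) := (StructEq.parAssoc _ _ _).symm

/-- Lemma 1: products always appear in the target state, i.e. if
`M →⟨W ▹ R,I,P⟩ M'` then `M' ≡ M'' | P` for some mixture `M''`. -/
theorem target_contains_products {α : Type} [DecidableEq α]
    {M M' : Mix α} {l : Label α} (h : MixStep M l M') :
    ∃ M'' : Mix α, StructEq M' (.par M'' (.entities l.P)) := by
  induction h with
  | ent D => exact ⟨.entities ∅, (StructEq.parUnit _).symm⟩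
  | ctx hc =>
      rw [ctxStep_P_eq hc]
      exact ⟨_, (StructEq.parUnit (.ctx _)).symm⟩
  | pro h => exact ⟨_, StructEq.refl _⟩
  | inh _ _ _ _ => exact ⟨_, (StructEq.parUnit _).symm⟩
  | par h₁ h₂ hdisj ih₁ ih₂ =>
      obtain ⟨N₁, e₁⟩ := ih₁
      obtain ⟨N₂, e₂⟩ := ih₂
      refine ⟨.par N₁ N₂, ?_⟩
      calc _ ≡' Mix.par (.par N₁ (.entities _)) (.par N₂ (.entities _)) := StructEq.parCong e₁ e₂
        _ ≡' Mix.par (.par N₁ N₂) (.par (.entities _) (.entities _)) := structEq_shuffle _ _ _ _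
        _ ≡' _ := StructEq.parCong (.refl _) (StructEq.entMerge _ _)
end

section
/- If a parallel composition of reactions ∏_{a∈A} a makes a transition with label ⟨W ▹ R,I,P⟩ to mixture M, then W = ∅ and M ≡ ∏_{a∈A} a | P (Lemma 2: pure reaction mixtures offer no entities and persist). -/
/-- The parallel composition `∏_{a ∈ A} a` of a finite list of reactions. -/
def prodReactions {α : Type} (A : List (Finset α × Finset α × Finset α)) : Mix α :=
  A.foldr (fun a acc => .par (.reaction a.1 a.2.1 a.2.2) acc) (.entities ∅)


namespace StructEq
lemma swap23 {α : Type} [DecidableEq α] (a b c d : Mix α) :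
    StructEq (.par (.par a b) (.par c d)) (.par (.par a c) (.par b d)) := by
  refine .trans (.parAssoc _ _ _) (.trans ?_ (.symm (.parAssoc _ _ _)))
  refine .parCong (.refl _) ?_
  refine .trans (.symm (.parAssoc _ _ _)) (.trans ?_ (.parAssoc _ _ _))
  exact .parCong (.parComm _ _) (.refl _)
end StructEq

/-- Lemma 2: pure reaction mixtures offer no entities and persist: if
`∏_{a∈A} a →⟨W ▹ R,I,P⟩ M` then `W = ∅` and `M ≡ ∏_{a∈A} a | P`. -/

theorem reactions_only_step {α : Type} [DecidableEq α]
    (A : List (Finset α × Finset α × Finset α)) {l : Label α} {M : Mix α}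
    (h : MixStep (prodReactions A) l M) :
    l.W = ∅ ∧ StructEq M (.par (prodReactions A) (.entities l.P)) := by
  induction A generalizing l M with
  | nil =>
    cases h
    exact ⟨rfl, .symm (.trans (.parCong (.refl _) (.refl _)) (.parUnit _))⟩
  | cons a A ih =>
    cases h with
    | par h1 h2 hdisj =>
      obtain ⟨hW2, he2⟩ := ih h2
      cases h1 with
      | pro hRI =>
        refine ⟨by simp [hW2], ?_⟩
        refine .trans (.parCong (.refl _) he2) ?_
        refine .trans (StructEq.swap23 _ _ _ _) ?_
        exact .parCong (.refl _) (.entMerge _ _)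
      | inh hRI hJ hQ hne =>
        refine ⟨by simp [hW2], ?_⟩
        simp only [Finset.empty_union]
        exact .trans (.parCong (.refl _) he2) (.symm (.parAssoc _ _ _))
end

section
/- Any transition M →⟨W ▹ R,I,P⟩ M' of a mixture process derived by the SOS rules satisfies (W ∪ R) ∩ I = ∅ (Lemma 3: no conflict between available/required entities and inhibitors). -/
lemma ctxStep_I {α : Type} {K : Ctx α} {l K'} (h : CtxStep K l K') : l.I = ∅ := by
  induction h with
  | cxt => rfl
  | unfold _ ih => exact ih
  | suml _ ih => exact ih
  | sumr _ ih => exact ih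

/-- Lemma 3: any SOS transition of a mixture satisfies `(W ∪ R) ∩ I = ∅`. -/
theorem no_conflict {α : Type} [DecidableEq α]
    {M M' : Mix α} {l : Label α} (h : MixStep M l M') :
    (l.W ∪ l.R) ∩ l.I = ∅ := by
  induction h with
  | ent D => simp
  | ctx hc => simp [ctxStep_I hc]
  | pro hRI => simpa using hRI
  | inh hRI hJ hQ _ =>
      simp only [Finset.empty_union]
      apply Finset.eq_empty_of_forall_notMem
      intro x hx
      rw [Finset.mem_inter] at hx
      have h2 := Finset.mem_inter.2 ⟨hQ hx.2, hJ hx.1⟩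
      rw [hRI] at h2
      exact absurd h2 (Finset.notMem_empty x)
  | par _ _ hside => simpa [Finset.union_assoc] using hside
end

section
/- Correspondence, soundness direction: for any RS (S,A) and n-step interactive process π = (γ,δ) with states W_i = C_i ∪ D_i, if the RS process P_i = [∏_{a∈A} a | D_i | K_{γ^i}] makes a transition P_i →⟨W ▹ R,I,P⟩ Q (for i < n), then W = W_i, P = D_{i+1}, and Q ≡ P_{i+1}. -/
/-- Result of a single reaction `(R,I,P)` on `W`. -/
def res {α : Type} [DecidableEq α] (a : Finset α × Finset α × Finset α) (W : Finset α) :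
    Finset α :=
  if a.1 ⊆ W ∧ a.2.1 ∩ W = ∅ then a.2.2 else ∅

/-- Result of the set of reactions `A` on `W`. -/
def resA {α : Type} [DecidableEq α] (A : List (Finset α × Finset α × Finset α))
    (W : Finset α) : Finset α :=
  A.foldr (fun a acc => res a W ∪ acc) ∅

/-- The context process `K_{γ^i} = C_i.C_{i+1}.⋯.C_n.0`. -/
def Kgamma {α : Type} (C : ℕ → Finset α) (i n : ℕ) : Ctx α :=
  ((List.range (n + 1 - i)).map (fun j => C (i + j))).foldr Ctx.pre Ctx.nil

/-- The encoding `⟦𝒜,π⟧_i = [∏_{a∈A} a | D_i | K_{γ^i}]` of the `i`-th step of an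
interactive process. -/
def Penc {α : Type} (A : List (Finset α × Finset α × Finset α))
    (C D : ℕ → Finset α) (n i : ℕ) : Mix α :=
  .par (prodReactions A) (.par (.entities (D i)) (.ctx (Kgamma C i n)))

/-!
A transition of `P_i = ∏ a | D_i | C_i.K_{γ^{i+1}}` is assembled by (Par) from one move of each
component. The entities can only offer `D_i` and the context only `C_i`, while reactions offer
nothing, so `W = C_i ∪ D_i`. Rule (Sys) puts every reactant of a move inside `W`, and the side
condition of (Par) keeps every inhibitor outside `W`. Therefore a reaction can move by (Pro) only
when `W` enables it, and by (Inh) only when `W` disables it, since the witness of an (Inh) move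
lies in `I ∩ W` or in `R \ W`. The products are thus `res_A(W) = D_{i+1}`, and the target
rearranges to `P_{i+1}`.
-/

namespace StructEq

variable {α : Type} [DecidableEq α]

theorem empty_par (M : Mix α) : StructEq (.par (.entities ∅) M) M :=
  .trans (.parComm _ _) (.parUnit M)

theorem par_entities_par_par_entities (M N : Mix α) (D₁ D₂ : Finset α) :
    StructEq (.par (.par M (.entities D₁)) (.par N (.entities D₂)))
      (.par (.par M N) (.entities (D₁ ∪ D₂))) := by
  refine .trans (.symm (.parAssoc _ _ _)) ?_
  refine .trans (.parCong (.parAssoc M _ N) (.refl _)) ?_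
  refine .trans (.parCong (.parCong (.refl M) (.parComm _ _)) (.refl _)) ?_
  refine .trans (.parCong (.symm (.parAssoc M N _)) (.refl _)) ?_
  exact .trans (.parAssoc _ _ _) (.parCong (.refl _) (.entMerge D₁ D₂))

end StructEq

namespace MixStep

variable {α : Type} [DecidableEq α] {l : Label α} {M' : Mix α}

theorem W_eq_empty_of_prodReactions {A : List (Finset α × Finset α × Finset α)}
    (h : MixStep (prodReactions A) l M') : l.W = ∅ := by
  induction A generalizing l M' with
  | nil => cases h; rfl
  | cons a A ih =>
    cases h with
    | par h₁ h₂ _ => cases h₁ <;> simp [ih h₂]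

theorem reaction_products_eq_res {R I P W : Finset α}
    (h : MixStep (.reaction R I P) l M') (hR : l.R ⊆ W) (hI : l.I ∩ W = ∅) :
    l.P = res (R, I, P) W ∧ StructEq M' (.par (.reaction R I P) (.entities (res (R, I, P) W))) := by
  cases h with
  | pro _ =>
    have hres : res (R, I, P) W = P := if_pos ⟨hR, hI⟩
    exact ⟨hres.symm, by rw [hres]; exact .refl _⟩
  | inh _ hJI hQR hJQ =>
    have hres : res (R, I, P) W = ∅ := by
      refine if_neg fun ⟨hRW, hIW⟩ => ?_
      obtain ⟨x, hx⟩ := hJQ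
      rcases Finset.mem_union.mp hx with hxJ | hxQ
      · exact Finset.notMem_empty x (hIW ▸ Finset.mem_inter.mpr ⟨hJI hxJ, hR hxJ⟩)
      · exact Finset.notMem_empty x (hI ▸ Finset.mem_inter.mpr ⟨hxQ, hRW (hQR hxQ)⟩)
    exact ⟨hres.symm, by rw [hres]; exact .symm (.parUnit _)⟩

theorem prodReactions_products_eq_resA {A : List (Finset α × Finset α × Finset α)} {W : Finset α}
    (h : MixStep (prodReactions A) l M') (hR : l.R ⊆ W) (hI : l.I ∩ W = ∅) :
    l.P = resA A W ∧ StructEq M' (.par (prodReactions A) (.entities (resA A W))) := by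
  induction A generalizing l M' with
  | nil => cases h; exact ⟨rfl, .symm (.entMerge ∅ ∅)⟩
  | cons a A ih =>
    cases h with | @par _ l₁ _ _ l₂ _ h₁ h₂ _ => ?_
    have hI₁ : l₁.I ∩ W = ∅ := Finset.subset_empty.mp
      (hI ▸ Finset.inter_subset_inter_right Finset.subset_union_left)
    have hI₂ : l₂.I ∩ W = ∅ := Finset.subset_empty.mp
      (hI ▸ Finset.inter_subset_inter_right Finset.subset_union_right)
    obtain ⟨hP₁, hM₁⟩ :=
      reaction_products_eq_res h₁ (Finset.subset_union_left.trans hR) hI₁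
    obtain ⟨hP₂, hM₂⟩ := ih h₂ (Finset.subset_union_right.trans hR) hI₂
    exact ⟨by simp only [hP₁, hP₂]; rfl,
      .trans (.parCong hM₁ hM₂) (StructEq.par_entities_par_par_entities _ _ _ _)⟩

end MixStep

theorem Kgamma_eq_pre {α : Type} (C : ℕ → Finset α) {i n : ℕ} (h : i ≤ n) :
    Kgamma C i n = .pre (C i) (Kgamma C (i + 1) n) := by
  rw [Kgamma, Kgamma, show n + 1 - i = n - i + 1 by omega, show n + 1 - (i + 1) = n - i by omega,
    List.range_succ_eq_map, List.map_cons, List.map_map, List.foldr_cons, Nat.add_zero]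
  congr 3
  funext j
  simp only [Function.comp_apply]
  congr 1
  omega

theorem correspondence_sound_general {α : Type} [DecidableEq α]
    (A : List (Finset α × Finset α × Finset α)) (C D : ℕ → Finset α) (n : ℕ)
    (hDsucc : ∀ i < n, D (i + 1) = resA A (D i ∪ C i))
    {i : ℕ} (hi : i < n) {l : Label α} {Q : Mix α}
    (h : SysStep (Penc A C D n i) l Q) :
    l.W = C i ∪ D i ∧ l.P = D (i + 1) ∧ StructEq Q (Penc A C D n (i + 1)) := by
  obtain ⟨hM, hRW⟩ := h
  rw [Penc, Kgamma_eq_pre C hi.le] at hM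
  cases hM with | @par _ l₁ _ _ _ _ hA hDK hside => ?_
  cases hDK with | par hD hK _ => ?_
  cases hD
  cases hK with | ctx hK => ?_
  cases hK
  have hW₁ := hA.W_eq_empty_of_prodReactions
  simp only [hW₁, Finset.empty_union, Finset.union_empty] at hRW hside ⊢
  have hI₁ : l₁.I ∩ (D i ∪ C i) = ∅ := Finset.disjoint_iff_inter_eq_empty.mp
    ((Finset.disjoint_iff_inter_eq_empty.mpr hside).symm.mono_right Finset.subset_union_left)
  obtain ⟨hP, hQ⟩ := hA.prodReactions_products_eq_resA hRW hI₁
  rw [← hDsucc i hi] at hP hQ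
  refine ⟨Finset.union_comm _ _, hP, ?_⟩
  exact .trans (.parCong hQ (.refl _))
    (.trans (.parAssoc _ _ _) (.parCong (.refl _) (.parCong (.refl _) (.empty_par _))))

/-- Correspondence, soundness: any transition of the encoded process `P_i` has
label `⟨W_i ▹ R,I,D_{i+1}⟩` with `W_i = C_i ∪ D_i` and target `≡ P_{i+1}`. -/
theorem correspondence_sound {α : Type} [DecidableEq α]
    (A : List (Finset α × Finset α × Finset α)) (C D : ℕ → Finset α) (n : ℕ)
    (hwf : ∀ a ∈ A, a.1 ∩ a.2.1 = ∅ ∧ a.1.Nonempty ∧ a.2.1.Nonempty)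
    (hD0 : D 0 = ∅) (hDsucc : ∀ i < n, D (i + 1) = resA A (D i ∪ C i))
    {i : ℕ} (hi : i < n) {l : Label α} {Q : Mix α}
    (h : SysStep (Penc A C D n i) l Q) :
    l.W = C i ∪ D i ∧ l.P = D (i + 1) ∧ StructEq Q (Penc A C D n (i + 1)) :=
  correspondence_sound_general A C D n hDsucc hi h
end

section
/- Bio-similarity with respect to F equals ordinary strong bisimilarity on the relabelled transition system obtained by replacing each label υ by F if υ ⊨ F and by ¬F otherwise. -/
section

variable {St L : Type*} (step : St → L → St → Prop) (F : L → Prop)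

/-- A bio-simulation on an LTS w.r.t. the assertion `F`: related states match
transitions up to the label equivalence `υ ≡_F w := (F υ ↔ F w)`. -/
def BioSim (Rel : St → St → Prop) : Prop :=
  ∀ P Q, Rel P Q →
    (∀ l P', step P l P' → ∃ w Q', step Q w Q' ∧ (F l ↔ F w) ∧ Rel P' Q') ∧
    (∀ w Q', step Q w Q' → ∃ l P', step P l P' ∧ (F l ↔ F w) ∧ Rel P' Q')

/-- Bio-similarity: the largest bio-simulation. -/
def bioSimilar (P Q : St) : Prop :=
  ∃ Rel, BioSim step F Rel ∧ Rel P Q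

/-- The relabelled LTS over labels `{F, ¬F}` (represented by booleans). -/
def relStep (P : St) (b : Bool) (P' : St) : Prop :=
  ∃ l, step P l P' ∧ (if b then F l else ¬ F l)

/-- An ordinary strong bisimulation on the relabelled LTS. -/
def OrdSim (Rel : St → St → Prop) : Prop :=
  ∀ P Q, Rel P Q →
    (∀ b P', relStep step F P b P' → ∃ Q', relStep step F Q b Q' ∧ Rel P' Q') ∧
    (∀ b Q', relStep step F Q b Q' → ∃ P', relStep step F P b P' ∧ Rel P' Q')

/-- Ordinary strong bisimilarity on the relabelled LTS. -/
def ordBisimilar (P Q : St) : Prop :=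
  ∃ Rel, OrdSim step F Rel ∧ Rel P Q

/-- Bio-similarity w.r.t. `F` equals ordinary strong bisimilarity on the LTS
relabelled over `{F, ¬F}`. -/
theorem bioSimilar_eq_ordBisimilar_on_relabelled :
    ∀ P Q : St, bioSimilar step F P Q ↔ ordBisimilar step F P Q := by
  intro P Q
  constructor
  · rintro ⟨Rel, hsim, hPQ⟩
    refine ⟨Rel, ?_, hPQ⟩
    intro A B hAB
    obtain ⟨h1, h2⟩ := hsim A B hAB
    constructor
    · rintro b P' ⟨l, hstep, hcond⟩
      obtain ⟨w, Q', hw, hiff, hR⟩ := h1 l P' hstep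
      refine ⟨Q', ⟨w, hw, ?_⟩, hR⟩
      cases b with
      | true => simp_all
      | false => simp_all
    · rintro b Q' ⟨w, hstep, hcond⟩
      obtain ⟨l, P', hl, hiff, hR⟩ := h2 w Q' hstep
      refine ⟨P', ⟨l, hl, ?_⟩, hR⟩
      cases b with
      | true => simp_all
      | false => simp_all
  · rintro ⟨Rel, hsim, hPQ⟩
    refine ⟨Rel, ?_, hPQ⟩
    intro A B hAB
    obtain ⟨h1, h2⟩ := hsim A B hAB
    constructor
    · intro l P' hstep
      by_cases hF : F l
      · obtain ⟨Q', ⟨w, hw, hFw⟩, hR⟩ := h1 true P' ⟨l, hstep, by simp [hF]⟩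
        exact ⟨w, Q', hw, by simpa using ⟨fun _ => hFw, fun _ => hF⟩, hR⟩
      · obtain ⟨Q', ⟨w, hw, hFw⟩, hR⟩ := h1 false P' ⟨l, hstep, by simp [hF]⟩
        simp at hFw
        exact ⟨w, Q', hw, by simp [hF, hFw], hR⟩
    · intro w Q' hstep
      by_cases hF : F w
      · obtain ⟨P', ⟨l, hl, hFl⟩, hR⟩ := h2 true Q' ⟨w, hstep, by simp [hF]⟩
        exact ⟨l, P', hl, by simpa using ⟨fun _ => hF, fun _ => hFl⟩, hR⟩
      · obtain ⟨P', ⟨l, hl, hFl⟩, hR⟩ := h2 false Q' ⟨w, hstep, by simp [hF]⟩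
        simp at hFl
        exact ⟨l, P', hl, by simp [hF, hFl], hR⟩

end
end
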